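/- arXiv:1308.4884 — 2 statements merged into one kernel-verified Lean document; each statement's English description precedes it below -/
import Mathlib

section
/- For every u ∈ [0,1], the map y ↦ F(u,y) is a bijection from [0, 1/u) onto [0, F(u,1/u)) (with 1/0 := ∞ and F(0,∞) := ∞); its inverse z ↦ F⁻¹(u,z) is continuously differentiable on [0, F(u,1/u)), with ∂_z F⁻¹(u,z) = [F⁻¹(u,z)(1 - u·F⁻¹(u,z))]^β for z > 0 and ∂_z F⁻¹(u,z) → 0 as z → 0⁺. -/
/- Fix β ∈ (0,1). F(u,y) = ∫₀^y [v(1-uv)]^{-β} dv, defined on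
D = {(u,y) ∈ [0,1] × [0,∞) : uy < 1}.
STATEMENT 2: For every u ∈ [0,1], the map y ↦ F(u,y) is a bijection from
[0, 1/u) onto [0, F(u,1/u)) (with 1/0 := ∞ and F(0,∞) := ∞, so the target is
[0,∞) when u = 0); its inverse z ↦ F⁻¹(u,z) is continuously differentiable on
[0, F(u,1/u)), with ∂_z F⁻¹(u,z) = [F⁻¹(u,z)(1 - u·F⁻¹(u,z))]^β for z > 0 and
∂_z F⁻¹(u,z) → 0 as z → 0⁺. -/

noncomputable def F (β u y : ℝ) : ℝ := ∫ v in (0:ℝ)..y, (v * (1 - u * v)) ^ (-β)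

/-- The domain [0,1/u) of F(u,·), with 1/0 := ∞. -/
def Dy (u : ℝ) : Set ℝ := {y : ℝ | 0 ≤ y ∧ u * y < 1}

/-- The range [0, F(u,1/u)) of F(u,·), with F(0,∞) := ∞. -/
noncomputable def Zset (β u : ℝ) : Set ℝ :=
  if u = 0 then Set.Ici 0 else Set.Ico 0 (F β u (1 / u))


/-!
`F(u, ·)` is the primitive of the positive integrand `(v(1-uv))^{-β}`, which is integrable up to
both endpoints `v = 0` and `v = 1/u` because `β < 1`: it is dominated by
`2^β (v^{-β} + (1/u - v)^{-β})`. Hence `F(u, ·)` is continuous and strictly increasing on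
`[0, 1/u]`, and the intermediate value theorem gives the bijection (for `u = 0`,
`F(0, y) = y^{1-β}/(1-β)` is unbounded). The inverse is continuous by monotonicity, and at
`z > 0` the inverse function theorem gives `∂_z F⁻¹ = 1 / F'(F⁻¹ z) = [F⁻¹ z (1 - u F⁻¹ z)]^β`.
This tends to `0` as `z → 0⁺` since `F⁻¹` is continuous with `F⁻¹ 0 = 0`, so the derivative
extends continuously to `z = 0`, where `F⁻¹` then has one-sided derivative `0`.
-/

open Set MeasureTheory Filter Topology intervalIntegral

theorem StrictMonoOn.strictMonoOn_invFunOn {α γ : Type*} [LinearOrder α] [Nonempty α]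
    [LinearOrder γ] {f : α → γ} {s : Set α} {t : Set γ} (hf : StrictMonoOn f s)
    (h : SurjOn f s t) : StrictMonoOn (Function.invFunOn f s) t := by
  intro a ha b hb hab
  refine lt_of_not_ge fun hle => hab.not_ge ?_
  calc b = f (Function.invFunOn f s b) := (h.rightInvOn_invFunOn hb).symm
    _ ≤ f (Function.invFunOn f s a) :=
      hf.monotoneOn (h.mapsTo_invFunOn hb) (h.mapsTo_invFunOn ha) hle
    _ = a := h.rightInvOn_invFunOn ha

theorem contDiffOn_one_of_hasDerivWithinAt {𝕜 E : Type*} [NontriviallyNormedField 𝕜]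
    [NormedAddCommGroup E] [NormedSpace 𝕜 E] {f f' : 𝕜 → E} {s : Set 𝕜}
    (hs : UniqueDiffOn 𝕜 s) (hf : ∀ x ∈ s, HasDerivWithinAt f (f' x) s x)
    (hf' : ContinuousOn f' s) : ContDiffOn 𝕜 1 f s :=
  (contDiffOn_one_iff_derivWithin hs).2
    ⟨fun x hx => (hf x hx).differentiableWithinAt,
      hf'.congr fun x hx => (hf x hx).derivWithin (hs x hx)⟩

noncomputable def integrand (β u v : ℝ) : ℝ := (v * (1 - u * v)) ^ (-β)

section Integrand

variable {β u v y : ℝ}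

@[simp] lemma F_zero_right (β u : ℝ) : F β u 0 = 0 := integral_same

lemma mul_lt_one_of_lt_of_mul_le_one (hu : 0 ≤ u) (hvy : v < y) (huy : u * y ≤ 1) :
    u * v < 1 := by
  rcases hu.eq_or_lt with rfl | hu
  · simp
  · nlinarith

lemma integrand_pos (hv : 0 < v) (huv : u * v < 1) : 0 < integrand β u v :=
  Real.rpow_pos_of_pos (mul_pos hv (by linarith)) _

lemma isOpen_setOf_pos_mul_lt_one : IsOpen {v : ℝ | 0 < v ∧ u * v < 1} :=
  (isOpen_lt continuous_const continuous_id).inter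
    (isOpen_lt (continuous_const.mul continuous_id) continuous_const)

lemma continuousOn_integrand : ContinuousOn (integrand β u) {v | 0 < v ∧ u * v < 1} :=
  ContinuousOn.rpow_const (by fun_prop) fun v hv =>
    Or.inl (mul_pos hv.1 (by linarith [hv.2])).ne'

/-- The two terms dominate the integrand where `uv ≤ 1/2` and where `uv ≥ 1/2` respectively. -/
lemma integrand_le (hβ : 0 ≤ β) (hu : 0 < u) (hv : 0 < v) (huv : u * v < 1) :
    integrand β u v ≤ 2 ^ β * (v ^ (-β) + (u⁻¹ - v) ^ (-β)) := by
  have hw : 0 < u⁻¹ - v := by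
    have := mul_inv_cancel₀ hu.ne'
    nlinarith
  have hle : ∀ x, 0 < x → x / 2 ≤ v * (1 - u * v) → integrand β u v ≤ 2 ^ β * x ^ (-β) := by
    intro x hx hxv
    calc integrand β u v ≤ (x / 2) ^ (-β) :=
          Real.rpow_le_rpow_of_nonpos (by positivity) hxv (by linarith)
      _ = 2 ^ β * x ^ (-β) := by
          rw [Real.div_rpow hx.le zero_le_two, Real.rpow_neg zero_le_two, div_inv_eq_mul, mul_comm]
  have h1 : 0 ≤ 2 ^ β * v ^ (-β) := by positivity
  have h2 : 0 ≤ 2 ^ β * (u⁻¹ - v) ^ (-β) := by positivity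
  rw [mul_add]
  rcases le_or_gt (u * v) (1 / 2) with h | h
  · have := hle v hv (by nlinarith)
    linarith
  · have hvw : v * (1 - u * v) = u * v * (u⁻¹ - v) := by field_simp
    have := hle (u⁻¹ - v) hw (by rw [hvw]; nlinarith)
    linarith

lemma intervalIntegrable_integrand (hβ0 : 0 ≤ β) (hβ1 : β < 1) (hu : 0 ≤ u) (hy : 0 ≤ y)
    (huy : u * y ≤ 1) : IntervalIntegrable (integrand β u) volume 0 y := by
  have hpow : ∀ a b : ℝ, IntervalIntegrable (fun x : ℝ => x ^ (-β)) volume a b :=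
    fun _ _ => intervalIntegrable_rpow' (by linarith)
  rcases hu.eq_or_lt with rfl | hu
  · convert hpow 0 y using 1
    ext v
    simp [integrand]
  have hdom : IntervalIntegrable (fun v => 2 ^ β * (v ^ (-β) + (u⁻¹ - v) ^ (-β))) volume 0 y := by
    have h := (hpow (u⁻¹ - 0) (u⁻¹ - y)).comp_sub_left u⁻¹
    simp only [sub_sub_cancel] at h
    exact ((hpow 0 y).add h).const_mul _
  have hIoo : ∀ v ∈ Ioo 0 y, 0 < v ∧ u * v < 1 :=
    fun v hv => ⟨hv.1, mul_lt_one_of_lt_of_mul_le_one hu.le hv.2 huy⟩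
  refine hdom.mono_fun' ?_ ?_ <;> rw [uIoc_of_le hy, ← Measure.restrict_congr_set Ioo_ae_eq_Ioc]
  · exact (continuousOn_integrand.mono hIoo).aestronglyMeasurable measurableSet_Ioo
  · refine (ae_restrict_iff' measurableSet_Ioo).2 (.of_forall fun v hv => ?_)
    obtain ⟨hv0, huv⟩ := hIoo v hv
    dsimp only
    rw [Real.norm_of_nonneg (integrand_pos hv0 huv).le]
    exact integrand_le hβ0 hu hv0 huv

lemma strictMonoOn_F (hβ0 : 0 ≤ β) (hβ1 : β < 1) (hu : 0 ≤ u) :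
    StrictMonoOn (F β u) {y | 0 ≤ y ∧ u * y ≤ 1} := by
  rintro a ⟨ha, hua⟩ b ⟨hb, hub⟩ hab
  have h0a := intervalIntegrable_integrand hβ0 hβ1 hu ha hua
  have h0b := intervalIntegrable_integrand hβ0 hβ1 hu hb hub
  have hpos : 0 < ∫ v in a..b, integrand β u v :=
    intervalIntegral_pos_of_pos_on (h0a.symm.trans h0b)
      (fun v hv => integrand_pos (ha.trans_lt hv.1)
        (mul_lt_one_of_lt_of_mul_le_one hu hv.2 hub)) hab
  rw [← integral_interval_sub_left h0b h0a] at hpos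
  exact sub_pos.1 hpos

lemma continuousOn_F (hβ0 : 0 ≤ β) (hβ1 : β < 1) (hu : 0 ≤ u) (hy : 0 ≤ y)
    (huy : u * y ≤ 1) : ContinuousOn (F β u) (Icc 0 y) := by
  have h := continuousOn_primitive_interval'
    (intervalIntegrable_integrand hβ0 hβ1 hu hy huy) left_mem_uIcc
  rwa [uIcc_of_le hy] at h

lemma hasDerivAt_F (hβ0 : 0 ≤ β) (hβ1 : β < 1) (hu : 0 ≤ u) (hy : 0 < y) (huy : u * y < 1) :
    HasDerivAt (F β u) (integrand β u y) y :=
  integral_hasDerivAt_right (intervalIntegrable_integrand hβ0 hβ1 hu hy.le huy.le)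
    (continuousOn_integrand.stronglyMeasurableAtFilter isOpen_setOf_pos_mul_lt_one y ⟨hy, huy⟩)
    (continuousOn_integrand.continuousAt (isOpen_setOf_pos_mul_lt_one.mem_nhds ⟨hy, huy⟩))

lemma F_zero_left (hβ1 : β < 1) (y : ℝ) : F β 0 y = y ^ (1 - β) / (1 - β) := by
  simp only [F, zero_mul, sub_zero, mul_one]
  rw [integral_rpow (Or.inl (by linarith)), Real.zero_rpow (by linarith), sub_zero,
    neg_add_eq_sub]

end Integrand

section Bijection

variable {β u y z : ℝ}

lemma Dy_mem_nhds (hy : 0 < y) (huy : u * y < 1) : Dy u ∈ 𝓝 y :=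
  mem_of_superset (isOpen_setOf_pos_mul_lt_one.mem_nhds ⟨hy, huy⟩) fun _ hv => ⟨hv.1.le, hv.2⟩

lemma Dy_mem_nhdsGE_zero : Dy u ∈ 𝓝[≥] 0 :=
  inter_mem_nhdsWithin (Ici 0)
    ((isOpen_lt (continuous_const.mul continuous_id) continuous_const).mem_nhds (by simp))

lemma zero_lt_F_one_div (hβ0 : 0 ≤ β) (hβ1 : β < 1) (hu : 0 < u) : 0 < F β u (1 / u) := by
  have h := strictMonoOn_F hβ0 hβ1 hu.le ⟨le_rfl, by simp⟩
    ⟨(one_div_pos.2 hu).le, (mul_one_div_cancel hu.ne').le⟩ (one_div_pos.2 hu)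
  rwa [F_zero_right] at h

lemma Zset_subset_Ici : Zset β u ⊆ Ici 0 := by
  unfold Zset
  split_ifs
  exacts [subset_rfl, Ico_subset_Ici_self]

lemma Zset_mem_nhds (hz : z ∈ Zset β u) (hz0 : 0 < z) : Zset β u ∈ 𝓝 z := by
  unfold Zset at *
  split_ifs at *
  exacts [Ici_mem_nhds hz0, Ico_mem_nhds hz0 hz.2]

lemma Zset_mem_nhdsGE_zero (hβ0 : 0 ≤ β) (hβ1 : β < 1) (hu : 0 ≤ u) : Zset β u ∈ 𝓝[≥] 0 := by
  unfold Zset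
  split_ifs with hu0
  · exact self_mem_nhdsWithin
  · exact Ico_mem_nhdsGE (zero_lt_F_one_div hβ0 hβ1 (hu.lt_of_ne' hu0))

lemma Zset_mem_nhdsGT_zero (hβ0 : 0 ≤ β) (hβ1 : β < 1) (hu : 0 ≤ u) : Zset β u ∈ 𝓝[>] 0 :=
  nhdsWithin_mono 0 Ioi_subset_Ici_self (Zset_mem_nhdsGE_zero hβ0 hβ1 hu)

lemma uniqueDiffOn_Zset : UniqueDiffOn ℝ (Zset β u) := by
  unfold Zset
  split_ifs
  exacts [uniqueDiffOn_Ici 0, uniqueDiffOn_Ico 0 _]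

lemma bijOn_F (hβ0 : 0 ≤ β) (hβ1 : β < 1) (hu : 0 ≤ u) : BijOn (F β u) (Dy u) (Zset β u) := by
  have hmono := strictMonoOn_F hβ0 hβ1 hu
  have hDy : Dy u ⊆ {y | 0 ≤ y ∧ u * y ≤ 1} := fun y hy => ⟨hy.1, hy.2.le⟩
  refine ⟨fun y hy => ?_, hmono.injOn.mono hDy, ?_⟩
  · have h0 : 0 ≤ F β u y := by
      simpa using hmono.monotoneOn ⟨le_rfl, by simp⟩ (hDy hy) hy.1
    unfold Zset
    split_ifs with hu0
    · exact h0
    · have hu' := hu.lt_of_ne' hu0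
      exact ⟨h0, hmono (hDy hy) ⟨(one_div_pos.2 hu').le, (mul_one_div_cancel hu0).le⟩
        ((lt_div_iff₀' hu').2 hy.2)⟩
  · unfold Zset
    split_ifs with hu0
    · subst hu0
      intro z (hz : 0 ≤ z)
      have hβ' : (1 - β) ≠ 0 := by linarith
      refine ⟨((1 - β) * z) ^ (1 - β)⁻¹, ⟨by positivity, by simp⟩, ?_⟩
      rw [F_zero_left hβ1, ← Real.rpow_mul (by nlinarith), inv_mul_cancel₀ hβ', Real.rpow_one,
        mul_div_cancel_left₀ _ hβ']
    · have hu' := hu.lt_of_ne' hu0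
      have hc := one_div_pos.2 hu'
      intro z hz
      obtain ⟨y, hy, rfl⟩ := intermediate_value_Ico hc.le
        (continuousOn_F hβ0 hβ1 hu hc.le (mul_one_div_cancel hu0).le) (by rwa [F_zero_right])
      exact ⟨y, ⟨hy.1, (lt_div_iff₀' hu').1 hy.2⟩, rfl⟩

end Bijection

noncomputable def invF (β u : ℝ) : ℝ → ℝ := Function.invFunOn (F β u) (Dy u)

section Inverse

variable {β u z : ℝ}

lemma invOn_invF (hβ0 : 0 ≤ β) (hβ1 : β < 1) (hu : 0 ≤ u) :
    InvOn (invF β u) (F β u) (Dy u) (Zset β u) :=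
  (bijOn_F hβ0 hβ1 hu).invOn_invFunOn

lemma mapsTo_invF (hβ0 : 0 ≤ β) (hβ1 : β < 1) (hu : 0 ≤ u) : MapsTo (invF β u) (Zset β u) (Dy u) :=
  (bijOn_F hβ0 hβ1 hu).surjOn.mapsTo_invFunOn

lemma image_invF (hβ0 : 0 ≤ β) (hβ1 : β < 1) (hu : 0 ≤ u) : invF β u '' Zset β u = Dy u :=
  ((invOn_invF hβ0 hβ1 hu).symm.bijOn (mapsTo_invF hβ0 hβ1 hu) (bijOn_F hβ0 hβ1 hu).mapsTo).image_eq

lemma strictMonoOn_invF (hβ0 : 0 ≤ β) (hβ1 : β < 1) (hu : 0 ≤ u) :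
    StrictMonoOn (invF β u) (Zset β u) :=
  ((strictMonoOn_F hβ0 hβ1 hu).mono fun _ hy => ⟨hy.1, hy.2.le⟩).strictMonoOn_invFunOn
    (bijOn_F hβ0 hβ1 hu).surjOn

lemma invF_zero (hβ0 : 0 ≤ β) (hβ1 : β < 1) (hu : 0 ≤ u) : invF β u 0 = 0 := by
  simpa using (invOn_invF hβ0 hβ1 hu).1 (⟨le_rfl, by simp⟩ : (0 : ℝ) ∈ Dy u)

lemma invF_pos (hβ0 : 0 ≤ β) (hβ1 : β < 1) (hu : 0 ≤ u)
    (hz : z ∈ Zset β u) (hz0 : 0 < z) : 0 < invF β u z := by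
  refine (mapsTo_invF hβ0 hβ1 hu hz).1.lt_of_ne fun h => hz0.ne ?_
  rw [← (invOn_invF hβ0 hβ1 hu).2 hz, ← h, F_zero_right]

lemma continuousAt_invF (hβ0 : 0 ≤ β) (hβ1 : β < 1) (hu : 0 ≤ u)
    (hz : z ∈ Zset β u) (hz0 : 0 < z) : ContinuousAt (invF β u) z :=
  (strictMonoOn_invF hβ0 hβ1 hu).continuousAt_of_image_mem_nhds (Zset_mem_nhds hz hz0) <| by
    rw [image_invF hβ0 hβ1 hu]
    exact Dy_mem_nhds (invF_pos hβ0 hβ1 hu hz hz0) (mapsTo_invF hβ0 hβ1 hu hz).2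

lemma continuousWithinAt_invF_zero (hβ0 : 0 ≤ β) (hβ1 : β < 1) (hu : 0 ≤ u) :
    ContinuousWithinAt (invF β u) (Ici 0) 0 :=
  (strictMonoOn_invF hβ0 hβ1 hu).continuousWithinAt_right_of_image_mem_nhdsWithin
    (Zset_mem_nhdsGE_zero hβ0 hβ1 hu) <| by
      rw [image_invF hβ0 hβ1 hu, invF_zero hβ0 hβ1 hu]
      exact Dy_mem_nhdsGE_zero

lemma continuousOn_invF (hβ0 : 0 ≤ β) (hβ1 : β < 1) (hu : 0 ≤ u) :
    ContinuousOn (invF β u) (Zset β u) := by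
  intro z hz
  rcases (mem_Ici.1 (Zset_subset_Ici hz)).eq_or_lt' with rfl | hz0
  · exact (continuousWithinAt_invF_zero hβ0 hβ1 hu).mono Zset_subset_Ici
  · exact (continuousAt_invF hβ0 hβ1 hu hz hz0).continuousWithinAt

lemma hasDerivAt_invF (hβ0 : 0 ≤ β) (hβ1 : β < 1) (hu : 0 ≤ u) (hz : z ∈ Zset β u) (hz0 : 0 < z) :
    HasDerivAt (invF β u) ((invF β u z * (1 - u * invF β u z)) ^ β) z := by
  have hy := mapsTo_invF hβ0 hβ1 hu hz
  have hy0 := invF_pos hβ0 hβ1 hu hz hz0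
  have h := (hasDerivAt_F hβ0 hβ1 hu hy0 hy.2).of_local_left_inverse
    (continuousAt_invF hβ0 hβ1 hu hz hz0) (integrand_pos hy0 hy.2).ne'
    (eventually_of_mem (Zset_mem_nhds hz hz0) (invOn_invF hβ0 hβ1 hu).2)
  rwa [integrand, Real.rpow_neg (mul_pos hy0 (by linarith [hy.2])).le, inv_inv] at h

lemma tendsto_deriv_invF (hβ : 0 < β) (hβ1 : β < 1) (hu : 0 ≤ u) :
    Tendsto (deriv (invF β u)) (𝓝[>] 0) (𝓝 0) := by
  have hG : Tendsto (invF β u) (𝓝[>] 0) (𝓝 0) := by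
    have h := (continuousWithinAt_invF_zero hβ.le hβ1 hu).mono Ioi_subset_Ici_self
    rwa [ContinuousWithinAt, invF_zero hβ.le hβ1 hu] at h
  have hbase := hG.mul ((tendsto_const_nhds (x := (1 : ℝ))).sub (hG.const_mul u))
  rw [zero_mul] at hbase
  refine (hbase.rpow_const_nhds_zero hβ).congr' ?_
  filter_upwards [inter_mem (Zset_mem_nhdsGT_zero hβ.le hβ1 hu) self_mem_nhdsWithin]
    with z ⟨hz, hz0⟩
  exact (hasDerivAt_invF hβ.le hβ1 hu hz hz0).deriv.symm

lemma hasDerivWithinAt_invF_zero (hβ : 0 < β) (hβ1 : β < 1) (hu : 0 ≤ u) :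
    HasDerivWithinAt (invF β u) 0 (Zset β u) 0 :=
  (hasDerivWithinAt_Ici_of_tendsto_deriv (s := Zset β u ∩ Ioi 0)
    (fun _ hz => (hasDerivAt_invF hβ.le hβ1 hu hz.1 hz.2).differentiableAt.differentiableWithinAt)
    ((continuousWithinAt_invF_zero hβ.le hβ1 hu).mono (inter_subset_left.trans Zset_subset_Ici))
    (inter_mem (Zset_mem_nhdsGT_zero hβ.le hβ1 hu) self_mem_nhdsWithin)
    (tendsto_deriv_invF hβ hβ1 hu)).mono Zset_subset_Ici

lemma contDiffOn_invF (hβ : 0 < β) (hβ1 : β < 1) (hu : 0 ≤ u) :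
    ContDiffOn ℝ 1 (invF β u) (Zset β u) := by
  have hcont := continuousOn_invF hβ.le hβ1 hu
  refine contDiffOn_one_of_hasDerivWithinAt uniqueDiffOn_Zset
    (f' := fun z => (invF β u z * (1 - u * invF β u z)) ^ β) (fun z hz => ?_)
    ((hcont.mul (continuousOn_const.sub (continuousOn_const.mul hcont))).rpow_const
      fun _ _ => Or.inr hβ.le)
  rcases (mem_Ici.1 (Zset_subset_Ici hz)).eq_or_lt' with rfl | hz0
  · simpa [invF_zero hβ.le hβ1 hu, Real.zero_rpow hβ.ne'] using
      hasDerivWithinAt_invF_zero hβ hβ1 hu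
  · exact (hasDerivAt_invF hβ.le hβ1 hu hz hz0).hasDerivWithinAt

end Inverse

theorem stmt2 (β : ℝ) (hβ : β ∈ Set.Ioo (0:ℝ) 1) (u : ℝ) (hu : u ∈ Set.Icc (0:ℝ) 1) :
    ∃ Finv : ℝ → ℝ,
      Set.BijOn (F β u) (Dy u) (Zset β u) ∧
      Set.InvOn Finv (F β u) (Dy u) (Zset β u) ∧
      ContDiffOn ℝ 1 Finv (Zset β u) ∧
      (∀ z ∈ Zset β u, 0 < z →
        HasDerivAt Finv ((Finv z * (1 - u * Finv z)) ^ β) z) ∧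
      Filter.Tendsto (deriv Finv) (nhdsWithin 0 (Set.Ioi 0)) (nhds 0) := by
  obtain ⟨hβ0, hβ1⟩ := hβ
  exact ⟨invF β u, bijOn_F hβ0.le hβ1 hu.1, invOn_invF hβ0.le hβ1 hu.1,
    contDiffOn_invF hβ0 hβ1 hu.1, fun _ hz hz0 => hasDerivAt_invF hβ0.le hβ1 hu.1 hz hz0,
    tendsto_deriv_invF hβ0 hβ1 hu.1⟩
end

section
/- There exists a constant l > 0 such that (G ∘ F₁⁻¹)'(z) < -l for every z ∈ (0, F₁(1)); in particular, G ∘ F₁⁻¹ is strictly decreasing on (0, F₁(1)). -/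
/-!
With `y = F₁⁻¹ z`, the inverse function rule gives `(G ∘ F₁⁻¹)'(z) = G'(y) / F₁'(y)`, and since
`F₁' = [y(1-y)]^{-β}` is also the weight in `G`, this ratio is
`-θ - θβ (μ - y)(1 - 2y) / (y(1 - y))`. The identity
`(μ - y)(1 - 2y) + y(1 - y) = (1 - μ) y² + μ (1 - y)² > 0` bounds the fraction below by `-1`,
so the derivative is below `-θ(1 - β)`.
-/

noncomputable def F1 (β y : ℝ) : ℝ := ∫ v in (0:ℝ)..y, (v * (1 - v)) ^ (-β)

noncomputable def F1inv (β z : ℝ) : ℝ := Function.invFunOn (F1 β) (Set.Icc 0 1) z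

noncomputable def G (β θ μ x : ℝ) : ℝ := θ * (μ - x) * (x * (1 - x)) ^ (-β)

open Set Filter MeasureTheory

section InverseOnIcc

variable {f : ℝ → ℝ} {a b z : ℝ}

lemma invFunOn_Icc_spec (hab : a ≤ b) (hf : ContinuousOn f (Icc a b))
    (hz : z ∈ Ioo (f a) (f b)) :
    Function.invFunOn f (Icc a b) z ∈ Ioo a b ∧ f (Function.invFunOn f (Icc a b) z) = z := by
  have hz_img : ∃ x ∈ Icc a b, f x = z := intermediate_value_Icc hab hf (Ioo_subset_Icc_self hz)
  have hmem := Function.invFunOn_mem hz_img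
  have heq := Function.invFunOn_eq hz_img
  refine ⟨⟨hmem.1.lt_of_ne ?_, hmem.2.lt_of_ne ?_⟩, heq⟩ <;> intro h
  · rw [← h] at heq
    exact hz.1.ne heq
  · rw [h] at heq
    exact hz.2.ne' heq

lemma StrictMonoOn.strictMonoOn_invFunOn_Icc (hmono : StrictMonoOn f (Icc a b)) (hab : a ≤ b)
    (hf : ContinuousOn f (Icc a b)) :
    StrictMonoOn (Function.invFunOn f (Icc a b)) (Ioo (f a) (f b)) := by
  intro z₁ hz₁ z₂ hz₂ hlt
  obtain ⟨hy₁, he₁⟩ := invFunOn_Icc_spec hab hf hz₁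
  obtain ⟨hy₂, he₂⟩ := invFunOn_Icc_spec hab hf hz₂
  rw [← he₁, ← he₂] at hlt
  exact (hmono.lt_iff_lt (Ioo_subset_Icc_self hy₁) (Ioo_subset_Icc_self hy₂)).1 hlt

lemma StrictMonoOn.continuousAt_invFunOn_Icc (hmono : StrictMonoOn f (Icc a b)) (hab : a ≤ b)
    (hf : ContinuousOn f (Icc a b)) (hz : z ∈ Ioo (f a) (f b)) :
    ContinuousAt (Function.invFunOn f (Icc a b)) z := by
  refine (hmono.strictMonoOn_invFunOn_Icc hab hf).continuousAt_of_image_mem_nhds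
    (isOpen_Ioo.mem_nhds hz)
    (mem_of_superset (isOpen_Ioo.mem_nhds (invFunOn_Icc_spec hab hf hz).1) ?_)
  intro y hy
  have hy' : y ∈ Icc a b := Ioo_subset_Icc_self hy
  exact ⟨f y, ⟨hmono (left_mem_Icc.2 hab) hy' hy.1, hmono hy' (right_mem_Icc.2 hab) hy.2⟩,
    hmono.injOn.leftInvOn_invFunOn hy'⟩

lemma StrictMonoOn.hasDerivAt_invFunOn_Icc (hmono : StrictMonoOn f (Icc a b)) (hab : a ≤ b)
    (hf : ContinuousOn f (Icc a b)) {f' : ℝ} (hz : z ∈ Ioo (f a) (f b))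
    (hderiv : HasDerivAt f f' (Function.invFunOn f (Icc a b) z)) (hf' : f' ≠ 0) :
    HasDerivAt (Function.invFunOn f (Icc a b)) f'⁻¹ z :=
  hderiv.of_local_left_inverse (hmono.continuousAt_invFunOn_Icc hab hf hz) hf' <|
    eventually_of_mem (isOpen_Ioo.mem_nhds hz) fun _ hw => (invFunOn_Icc_spec hab hf hw).2

end InverseOnIcc

section F1

variable {β : ℝ}

lemma hasDerivAt_weight {y : ℝ} (hy : y * (1 - y) ≠ 0) :
    HasDerivAt (fun x : ℝ => (x * (1 - x)) ^ (-β))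
      (-β * ((1 - 2 * y) / (y * (1 - y))) * (y * (1 - y)) ^ (-β)) y := by
  have hpoly : HasDerivAt (fun x : ℝ => x * (1 - x)) (1 - 2 * y) y :=
    ((hasDerivAt_id' y).mul ((hasDerivAt_id' y).const_sub 1)).congr_deriv (by ring)
  convert hpoly.rpow_const (p := -β) (Or.inl hy) using 1
  rw [Real.rpow_sub_one hy]
  ring

lemma intervalIntegrable_weight_zero_half (hβ : β < 1) :
    IntervalIntegrable (fun v : ℝ => (v * (1 - v)) ^ (-β)) volume 0 (1 / 2) := by
  have hprod : IntervalIntegrable (fun v : ℝ => v ^ (-β) * (1 - v) ^ (-β)) volume 0 (1 / 2) := by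
    refine (intervalIntegral.intervalIntegrable_rpow' (by linarith)).mul_continuousOn ?_
    intro v hv
    rw [uIcc_of_le (by norm_num)] at hv
    exact ((continuous_const.sub continuous_id).continuousAt.rpow_const
      (Or.inl (show (0 : ℝ) < 1 - v by linarith [hv.2]).ne')).continuousWithinAt
  refine hprod.congr fun v hv => ?_
  rw [uIoc_of_le (by norm_num)] at hv
  exact (Real.mul_rpow hv.1.le (by linarith [hv.2])).symm

lemma intervalIntegrable_weight (hβ : β < 1) :
    IntervalIntegrable (fun v : ℝ => (v * (1 - v)) ^ (-β)) volume 0 1 := by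
  have hleft := intervalIntegrable_weight_zero_half hβ
  -- the weight is symmetric under `v ↦ 1 - v`
  have hright : IntervalIntegrable (fun v : ℝ => (v * (1 - v)) ^ (-β)) volume (1 / 2) 1 := by
    have := (hleft.comp_sub_left 1).symm
    rw [show (1 : ℝ) - 1 / 2 = 1 / 2 by norm_num, sub_zero] at this
    refine this.congr fun v _ => ?_
    simp only [sub_sub_cancel, mul_comm]
  exact hleft.trans hright

lemma intervalIntegrable_weight_of_mem_Icc (hβ : β < 1) {a b : ℝ} (ha : a ∈ Icc (0 : ℝ) 1)
    (hb : b ∈ Icc (0 : ℝ) 1) :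
    IntervalIntegrable (fun v : ℝ => (v * (1 - v)) ^ (-β)) volume a b := by
  refine (intervalIntegrable_weight hβ).mono_set (uIcc_subset_uIcc ?_ ?_) <;>
    rwa [uIcc_of_le zero_le_one]

lemma F1_zero : F1 β 0 = 0 := intervalIntegral.integral_same

lemma continuousOn_F1 (hβ : β < 1) : ContinuousOn (F1 β) (Icc 0 1) := by
  have := intervalIntegral.continuousOn_primitive_interval' (intervalIntegrable_weight hβ)
    left_mem_uIcc
  rwa [uIcc_of_le zero_le_one] at this

lemma hasDerivAt_F1 (hβ : β < 1) {y : ℝ} (hy : y ∈ Ioo (0 : ℝ) 1) :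
    HasDerivAt (F1 β) ((y * (1 - y)) ^ (-β)) y := by
  have hy0 : y * (1 - y) ≠ 0 := (mul_pos hy.1 (sub_pos.2 hy.2)).ne'
  exact intervalIntegral.integral_hasDerivAt_right
    (intervalIntegrable_weight_of_mem_Icc hβ (left_mem_Icc.2 zero_le_one) (Ioo_subset_Icc_self hy))
    (Measurable.stronglyMeasurable (by fun_prop)).stronglyMeasurableAtFilter
    (hasDerivAt_weight hy0).continuousAt

lemma strictMonoOn_F1 (hβ : β < 1) : StrictMonoOn (F1 β) (Icc 0 1) := by
  refine strictMonoOn_of_deriv_pos (convex_Icc 0 1) (continuousOn_F1 hβ) fun y hy => ?_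
  rw [interior_Icc] at hy
  rw [(hasDerivAt_F1 hβ hy).deriv]
  exact Real.rpow_pos_of_pos (mul_pos hy.1 (sub_pos.2 hy.2)) _

end F1

section F1inv

variable {β z : ℝ}

lemma F1inv_spec (hβ : β < 1) (hz : z ∈ Ioo 0 (F1 β 1)) :
    F1inv β z ∈ Ioo 0 1 ∧ F1 β (F1inv β z) = z := by
  rw [← F1_zero (β := β)] at hz
  exact invFunOn_Icc_spec zero_le_one (continuousOn_F1 hβ) hz

lemma hasDerivAt_F1inv (hβ : β < 1) (hz : z ∈ Ioo 0 (F1 β 1)) :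
    HasDerivAt (F1inv β) (((F1inv β z * (1 - F1inv β z)) ^ (-β))⁻¹) z := by
  have hy := (F1inv_spec hβ hz).1
  rw [← F1_zero (β := β)] at hz
  exact (strictMonoOn_F1 hβ).hasDerivAt_invFunOn_Icc zero_le_one (continuousOn_F1 hβ) hz
    (hasDerivAt_F1 hβ hy) (Real.rpow_pos_of_pos (mul_pos hy.1 (sub_pos.2 hy.2)) _).ne'

end F1inv

section G

variable {β θ μ y : ℝ}

lemma hasDerivAt_G (hy : y * (1 - y) ≠ 0) :
    HasDerivAt (G β θ μ)
      ((-θ - θ * β * ((μ - y) * (1 - 2 * y) / (y * (1 - y)))) * (y * (1 - y)) ^ (-β)) y :=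
  ((((hasDerivAt_id' y).const_sub μ).const_mul θ).mul
    (hasDerivAt_weight hy)).congr_deriv (by ring)

lemma hasDerivAt_G_comp_F1inv (hβ : β < 1) {z : ℝ} (hz : z ∈ Ioo 0 (F1 β 1)) :
    HasDerivAt (fun z' => G β θ μ (F1inv β z'))
      (-θ - θ * β * ((μ - F1inv β z) * (1 - 2 * F1inv β z) / (F1inv β z * (1 - F1inv β z)))) z := by
  have hy := (F1inv_spec hβ hz).1
  have hw : (F1inv β z * (1 - F1inv β z)) ^ (-β) ≠ 0 :=
    (Real.rpow_pos_of_pos (mul_pos hy.1 (sub_pos.2 hy.2)) _).ne'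
  exact ((hasDerivAt_G (θ := θ) (μ := μ) (mul_pos hy.1 (sub_pos.2 hy.2)).ne').comp z
    (hasDerivAt_F1inv hβ hz)).congr_deriv (mul_inv_cancel_right₀ hw _)

lemma G_slope_lt (hβ : 0 < β) (hθ : 0 < θ) (hμ : μ ∈ Icc (0 : ℝ) 1) (hy : y ∈ Ioo (0 : ℝ) 1) :
    -θ - θ * β * ((μ - y) * (1 - 2 * y) / (y * (1 - y))) < -(θ * (1 - β)) := by
  have hA : 0 < y * (1 - y) := mul_pos hy.1 (sub_pos.2 hy.2)
  have hq : -1 < (μ - y) * (1 - 2 * y) / (y * (1 - y)) := by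
    rw [lt_div_iff₀ hA]
    nlinarith [mul_nonneg hμ.1 (sq_nonneg (1 - y)), mul_nonneg (sub_nonneg.2 hμ.2) (sq_nonneg y),
      mul_pos hy.1 hy.1, mul_pos (sub_pos.2 hy.2) (sub_pos.2 hy.2)]
  nlinarith [mul_lt_mul_of_pos_left hq (mul_pos hθ hβ)]

end G

theorem stmt8 (β θ μ : ℝ) (hβ : β ∈ Set.Ioo (0:ℝ) 1) (hθ : 0 < θ)
    (hμ : μ ∈ Set.Ioo (0:ℝ) 1) :
    ∃ l : ℝ, 0 < l ∧
      (∀ z ∈ Set.Ioo 0 (F1 β 1),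
        ∃ d : ℝ, HasDerivAt (fun z' => G β θ μ (F1inv β z')) d z ∧ d < -l) ∧
      StrictAntiOn (fun z => G β θ μ (F1inv β z)) (Set.Ioo 0 (F1 β 1)) := by
  obtain ⟨hβ0, hβ1⟩ := hβ
  have hl : 0 < θ * (1 - β) := mul_pos hθ (sub_pos.2 hβ1)
  have hderiv : ∀ z ∈ Ioo 0 (F1 β 1),
      ∃ d : ℝ, HasDerivAt (fun z' => G β θ μ (F1inv β z')) d z ∧ d < -(θ * (1 - β)) :=
    fun z hz => ⟨_, hasDerivAt_G_comp_F1inv hβ1 hz,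
      G_slope_lt hβ0 hθ (Ioo_subset_Icc_self hμ) (F1inv_spec hβ1 hz).1⟩
  refine ⟨θ * (1 - β), hl, hderiv, strictAntiOn_of_deriv_neg (convex_Ioo _ _) ?_ ?_⟩
  · intro z hz
    obtain ⟨d, hd, -⟩ := hderiv z hz
    exact hd.continuousAt.continuousWithinAt
  · intro z hz
    rw [interior_Ioo] at hz
    obtain ⟨d, hd, hdl⟩ := hderiv z hz
    rw [hd.deriv]
    exact hdl.trans (neg_lt_zero.2 hl)
end
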